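/- Let h, k be positive integers and let u ∈ (0,1) satisfy h·u < k·√(1−u²). Define ρ(t) = −(u/k)·cos((h+k)πt) + √(1−u²)/h and γ̃_u(t) = (2/π)·( (u√(1−u²)/(h+k))·sin((h+k)πt), cos(hπt)·ρ(t), sin(hπt)·ρ(t) ), and let γ_u(t) = (2/π)·( (u√(1−u²)/(h+k))·sin((h+k)πt), −(u/k)·cos(kπt) + (√(1−u²)/h)·cos(hπt), (u/k)·sin(kπt) + (√(1−u²)/h)·sin(hπt) ). Then: (a) for all t, γ̃_u(t) − γ_u(t) = (2u/(πk))·( 0, sin(hπt)·sin((h+k)πt), −cos(hπt)·sin((h+k)πt) ); and (b) writing (x(t), y(t), z(t)) = γ̃_u(t), for all t one has ( (πk/(2u))·( √(y(t)² + z(t)²) − 2√(1−u²)/(πh) ) )² + ( (π(h+k)/(2u√(1−u²)))·x(t) )² = 1, i.e. γ̃_u lies on a torus of revolution about the x-axis with elliptical cross-sections. -/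
import Mathlib


noncomputable section

/-- The explicit curve `γ_u` of the one-parameter family of critical framed curves. -/
def gammaU (h k : ℤ) (u : ℝ) (t : ℝ) : Fin 3 → ℝ :=
  ![(2 / Real.pi) * (u * Real.sqrt (1 - u ^ 2) / ((h : ℝ) + (k : ℝ)) *
      Real.sin (((h : ℝ) + (k : ℝ)) * Real.pi * t)),
    (2 / Real.pi) * (-(u / (k : ℝ)) * Real.cos ((k : ℝ) * Real.pi * t) +
      Real.sqrt (1 - u ^ 2) / (h : ℝ) * Real.cos ((h : ℝ) * Real.pi * t)),
    (2 / Real.pi) * ((u / (k : ℝ)) * Real.sin ((k : ℝ) * Real.pi * t) +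
      Real.sqrt (1 - u ^ 2) / (h : ℝ) * Real.sin ((h : ℝ) * Real.pi * t))]

/-- The comparison curve `γ̃_u`, an `(h, h+k)`-torus knot lying on a torus of revolution
with elliptical cross-sections, whose radial profile is
`ρ(t) = −(u/k)·cos((h+k)πt) + √(1−u²)/h`. -/
def gammaTilde (h k : ℤ) (u : ℝ) (t : ℝ) : Fin 3 → ℝ :=
  ![(2 / Real.pi) * (u * Real.sqrt (1 - u ^ 2) / ((h : ℝ) + (k : ℝ)) *
      Real.sin (((h : ℝ) + (k : ℝ)) * Real.pi * t)),
    (2 / Real.pi) * (Real.cos ((h : ℝ) * Real.pi * t) *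
      (-(u / (k : ℝ)) * Real.cos (((h : ℝ) + (k : ℝ)) * Real.pi * t) +
        Real.sqrt (1 - u ^ 2) / (h : ℝ))),
    (2 / Real.pi) * (Real.sin ((h : ℝ) * Real.pi * t) *
      (-(u / (k : ℝ)) * Real.cos (((h : ℝ) + (k : ℝ)) * Real.pi * t) +
        Real.sqrt (1 - u ^ 2) / (h : ℝ)))]

/-- (a) The difference `γ̃_u − γ_u` is `(2u/(πk))·(0, sin(hπt)·sin((h+k)πt),
−cos(hπt)·sin((h+k)πt))`; and (b) `γ̃_u` lies on a torus of revolution about the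
`x`-axis with elliptical cross-sections: writing `(x,y,z) = γ̃_u(t)`,
`((πk/(2u))·(√(y²+z²) − 2√(1−u²)/(πh)))² + ((π(h+k)/(2u√(1−u²)))·x)² = 1`. -/
theorem gammaTilde_torus
    (h k : ℤ) (hh : 0 < h) (hk : 0 < k)
    (u : ℝ) (hu : u ∈ Set.Ioo (0 : ℝ) 1)
    (hcond : (h : ℝ) * u < (k : ℝ) * Real.sqrt (1 - u ^ 2)) :
    (∀ t : ℝ, gammaTilde h k u t - gammaU h k u t =
      ![0,
        (2 * u / (Real.pi * (k : ℝ))) *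
          (Real.sin ((h : ℝ) * Real.pi * t) * Real.sin (((h : ℝ) + (k : ℝ)) * Real.pi * t)),
        -((2 * u / (Real.pi * (k : ℝ))) *
          (Real.cos ((h : ℝ) * Real.pi * t) * Real.sin (((h : ℝ) + (k : ℝ)) * Real.pi * t)))]) ∧
    (∀ t : ℝ,
      ((Real.pi * (k : ℝ) / (2 * u)) *
          (Real.sqrt ((gammaTilde h k u t 1) ^ 2 + (gammaTilde h k u t 2) ^ 2) -
            2 * Real.sqrt (1 - u ^ 2) / (Real.pi * (h : ℝ)))) ^ 2 +
        ((Real.pi * ((h : ℝ) + (k : ℝ)) / (2 * u * Real.sqrt (1 - u ^ 2))) *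
          gammaTilde h k u t 0) ^ 2 = 1) := by
  obtain ⟨hu0, hu1⟩ := hu
  have hπ : (0:ℝ) < Real.pi := Real.pi_pos
  have hh0 : (0:ℝ) < (h:ℝ) := by exact_mod_cast hh
  have hk0 : (0:ℝ) < (k:ℝ) := by exact_mod_cast hk
  have hs0 : (0:ℝ) < Real.sqrt (1 - u ^ 2) := Real.sqrt_pos.2 (by nlinarith)
  constructor
  · intro t
    have e : (k:ℝ) * Real.pi * t = ((h:ℝ)+k)*Real.pi*t - (h:ℝ)*Real.pi*t := by ring
    funext i
    fin_cases i <;>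
      simp [gammaTilde, gammaU, e, Real.sin_sub, Real.cos_sub] <;>
      field_simp <;> ring
  · intro t
    have hx : gammaTilde h k u t 0 = (2 / Real.pi) *
        (u * Real.sqrt (1 - u ^ 2) / ((h:ℝ)+k) * Real.sin (((h:ℝ)+k) * Real.pi * t)) := by
      simp [gammaTilde]
    have hy : gammaTilde h k u t 1 = (2 / Real.pi) * (Real.cos ((h:ℝ)*Real.pi*t) *
        (-(u / (k:ℝ)) * Real.cos (((h:ℝ)+k) * Real.pi * t) + Real.sqrt (1 - u ^ 2) / (h:ℝ))) := by
      simp [gammaTilde]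
    have hz : gammaTilde h k u t 2 = (2 / Real.pi) * (Real.sin ((h:ℝ)*Real.pi*t) *
        (-(u / (k:ℝ)) * Real.cos (((h:ℝ)+k) * Real.pi * t) + Real.sqrt (1 - u ^ 2) / (h:ℝ))) := by
      simp [gammaTilde]
    set s := Real.sqrt (1 - u ^ 2) with hsdef
    set C := ((h:ℝ)+k) * Real.pi * t with hCdef
    set A := (h:ℝ) * Real.pi * t with hAdef
    set ρ := -(u / (k:ℝ)) * Real.cos C + s / (h:ℝ) with hρdef
    have hρ0 : 0 ≤ ρ := by
      have h1 : u / (k:ℝ) < s / (h:ℝ) := by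
        rw [div_lt_div_iff₀ hk0 hh0]; nlinarith
      have h2 : Real.cos C ≤ 1 := Real.cos_le_one C
      have h3 : 0 < u / (k:ℝ) := div_pos hu0 hk0
      have h4 : u / (k:ℝ) * Real.cos C ≤ u / (k:ℝ) := by nlinarith
      rw [hρdef]
      nlinarith
    have hsq : (gammaTilde h k u t 1)^2 + (gammaTilde h k u t 2)^2 = ((2/Real.pi) * ρ)^2 := by
      rw [hy, hz]
      linear_combination ((2/Real.pi)*ρ)^2 * Real.sin_sq_add_cos_sq A
    have hsqrt : Real.sqrt ((gammaTilde h k u t 1)^2 + (gammaTilde h k u t 2)^2)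
        = (2/Real.pi) * ρ := by
      rw [hsq, Real.sqrt_sq (mul_nonneg (by positivity) hρ0)]
    rw [hsqrt, hx]
    have hhk : (0:ℝ) < (h:ℝ)+k := by linarith
    have e1 : Real.pi * (k:ℝ) / (2*u) * ((2/Real.pi)*ρ - 2*s/(Real.pi*(h:ℝ)))
        = -Real.cos C := by
      rw [hρdef]; field_simp; ring
    have e2 : Real.pi * ((h:ℝ)+k) / (2*u*s) *
        ((2/Real.pi) * (u * s / ((h:ℝ)+k) * Real.sin C)) = Real.sin C := by
      field_simp
    rw [e1, e2, neg_sq, add_comm]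
    exact Real.sin_sq_add_cos_sq C
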